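/- arXiv:1806.00652 — 3 statements merged into one kernel-verified Lean document; each statement's English description precedes it below -/
import Mathlib

section
/- Let α ∈ (0,1), let v : [0,1] → ℝ be C¹ with v(ρ) ≥ 0 for all ρ ∈ [0,1) and v(1) = 0, let a : [0,1] → ℝ satisfy a(ρ) > 0 for all ρ ∈ (0,1)∖{α}, and set D(ρ) := −a(ρ)v′(ρ). Then it is impossible that both D(ρ) > 0 for all ρ ∈ (0,α) and D(ρ) < 0 for all ρ ∈ (α,1). -/
open Set

/-- Lemma 3.1: if `D(ρ) = -a(ρ)v'(ρ)` with `a > 0` on `(0,1)∖{α}` and `v`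
satisfies (fcm) (`v ∈ C¹`, `v ≥ 0` on `[0,1)`, `v(1) = 0`), then `D` cannot
satisfy (D1) (positive on `(0,α)`, negative on `(α,1)`). -/
theorem stmt16 (α : ℝ) (hα : α ∈ Ioo (0:ℝ) 1)
    (v a D : ℝ → ℝ)
    (hv : ContDiffOn ℝ 1 v (Icc 0 1))
    (hv0 : ∀ ρ ∈ Ico (0:ℝ) 1, 0 ≤ v ρ) (hv1 : v 1 = 0)
    (ha : ∀ ρ ∈ Ioo (0:ℝ) 1, ρ ≠ α → 0 < a ρ)
    (hD : ∀ ρ, D ρ = -(a ρ) * deriv v ρ) :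
    ¬ ((∀ ρ ∈ Ioo (0:ℝ) α, 0 < D ρ) ∧ (∀ ρ ∈ Ioo α 1, D ρ < 0)) := by
  rintro ⟨-, h2⟩
  obtain ⟨hα0, hα1⟩ := hα
  set ρ₀ : ℝ := (α + 1) / 2 with hρ₀
  have hρ₀α : α < ρ₀ := by simp [hρ₀]; linarith
  have hρ₀1 : ρ₀ < 1 := by simp [hρ₀]; linarith
  have hρ₀0 : 0 < ρ₀ := by positivity
  -- v' > 0 on (α,1)
  have hv' : ∀ ρ ∈ Ioo α 1, 0 < deriv v ρ := by
    intro ρ hρ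
    have hρ01 : ρ ∈ Ioo (0:ℝ) 1 := ⟨lt_trans hα0 hρ.1, hρ.2⟩
    have haρ := ha ρ hρ01 (ne_of_gt hρ.1)
    have hDρ := h2 ρ hρ
    rw [hD ρ] at hDρ
    nlinarith
  -- v is strictly monotone on [ρ₀, 1]
  have hmono : StrictMonoOn v (Icc ρ₀ 1) := by
    apply strictMonoOn_of_deriv_pos (convex_Icc ρ₀ 1)
    · exact (hv.continuousOn).mono (Icc_subset_Icc (le_of_lt hρ₀0) le_rfl)
    · intro x hx
      rw [interior_Icc] at hx
      exact hv' x ⟨lt_trans hρ₀α hx.1, hx.2⟩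
  have h1 : v ρ₀ < v 1 :=
    hmono ⟨le_rfl, le_of_lt hρ₀1⟩ ⟨le_of_lt hρ₀1, le_rfl⟩ hρ₀1
  have h0 : 0 ≤ v ρ₀ := hv0 ρ₀ ⟨le_of_lt hρ₀0, hρ₀1⟩
  rw [hv1] at h1
  linarith
end

section
/- Let v̄ > 0, h > 0, τ > 0, set σ := 2τ/(hv̄), and define D(ρ) := 2hv̄³ρ(1 − ρ)²((1 − ρ)³ − σρ) for ρ ∈ [0,1]. Then: (i) there exists a unique α ∈ (0,1) with (1 − α)³ = σα, and D(ρ) > 0 for ρ ∈ (0,α) while D(ρ) < 0 for ρ ∈ (α,1); (ii) if moreover α > 1/2, then with f(ρ) := v̄ρ(1 − ρ)², for every m with v̄(1 − α)(1 − 3α) < m < −v̄α(1 − α) there exist ℓ⁻ ∈ (0,α) and ℓ⁺ ∈ (α,1) such that (f(α) − f(ℓ⁻))/(α − ℓ⁻) = (f(ℓ⁺) − f(α))/(ℓ⁺ − α) = m, f(ρ) > f(α) + m(ρ − α) for all ρ ∈ (ℓ⁻,α), and f(ρ) < f(α) + m(ρ − α) for all ρ ∈ (α,ℓ⁺); in particular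 there are infinitely many such pairs (ℓ⁻, ℓ⁺). -/
open Set

-- roots of a quadratic that is somewhere negative
lemma quad_roots (a b c x : ℝ) (ha0 : 0 < a) (hx : a * x ^ 2 + b * x + c < 0) :
    ∃ r1 r2 : ℝ, r1 < x ∧ x < r2 ∧
      (∀ ρ : ℝ, a * ρ ^ 2 + b * ρ + c = a * (ρ - r1) * (ρ - r2)) := by
  have hane : a ≠ 0 := ne_of_gt ha0
  set disc := b ^ 2 - 4 * a * c with hdisc
  have hdpos : 0 < disc := by nlinarith [sq_nonneg (2 * a * x + b)]
  have hs2 : Real.sqrt disc ^ 2 = disc := Real.sq_sqrt hdpos.le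
  have hspos : 0 < Real.sqrt disc := Real.sqrt_pos.2 hdpos
  refine ⟨(-b - Real.sqrt disc) / (2 * a), (-b + Real.sqrt disc) / (2 * a), ?_, ?_, ?_⟩
  · rw [div_lt_iff₀ (by positivity)]; nlinarith [sq_nonneg (2 * a * x + b)]
  · rw [lt_div_iff₀ (by positivity)]; nlinarith [sq_nonneg (2 * a * x + b)]
  · intro ρ
    field_simp
    nlinarith [hs2]

lemma chord_exists (vbar α m : ℝ) (hvbar : 0 < vbar) (hα0 : 0 < α) (hα1 : α < 1)
    (hm1 : vbar * (1 - α) * (1 - 3 * α) < m) (hm2 : m < -(vbar * α * (1 - α)))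
    (f : ℝ → ℝ) (hf : ∀ ρ, f ρ = vbar * ρ * (1 - ρ) ^ 2) :
    ∃ ℓm ∈ Ioo (0:ℝ) α, ∃ ℓp ∈ Ioo α 1,
      (f α - f ℓm) / (α - ℓm) = m ∧ (f ℓp - f α) / (ℓp - α) = m ∧
      (∀ ρ ∈ Ioo ℓm α, f α + m * (ρ - α) < f ρ) ∧
      (∀ ρ ∈ Ioo α ℓp, f ρ < f α + m * (ρ - α)) := by
  have hQα : vbar * α ^ 2 + (vbar * (α - 2)) * α + (vbar * (1 - α) ^ 2 - m) < 0 := by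
    nlinarith [hm1]
  obtain ⟨r1, r2, hr1α, hr2α, hfact⟩ :=
    quad_roots vbar (vbar * (α - 2)) (vbar * (1 - α) ^ 2 - m) α hvbar hQα
  have hr12 : r1 < r2 := hr1α.trans hr2α
  -- Q(0) > 0 and Q(1) > 0
  have hQ0 : 0 < vbar * (0 - r1) * (0 - r2) := by
    rw [← hfact]
    nlinarith [mul_pos (mul_pos hvbar hα0) (sub_pos.2 hα1)]
  have hQ1 : 0 < vbar * (1 - r1) * (1 - r2) := by
    rw [← hfact]; nlinarith [hm2]
  have hr10 : 0 < r1 := by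
    by_contra hcon
    push_neg at hcon
    nlinarith [hQ0, mul_nonneg (mul_pos hvbar (hα0.trans hr2α)).le (neg_nonneg.2 hcon)]
  have hr21 : r2 < 1 := by
    by_contra hcon
    push_neg at hcon
    nlinarith [hQ1, mul_pos hvbar (show (0:ℝ) < 1 - r1 by linarith)]
  have hkey : ∀ ρ : ℝ, f ρ - (f α + m * (ρ - α)) = (ρ - α) * (vbar * (ρ - r1) * (ρ - r2)) := by
    intro ρ; rw [← hfact, hf, hf]; ring
  have hQr1 : f r1 - (f α + m * (r1 - α)) = 0 := by rw [hkey]; ring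
  have hQr2 : f r2 - (f α + m * (r2 - α)) = 0 := by rw [hkey]; ring
  refine ⟨r1, ⟨hr10, hr1α⟩, r2, ⟨hr2α, hr21⟩, ?_, ?_, ?_, ?_⟩
  · rw [div_eq_iff (by linarith : α - r1 ≠ 0)]; linarith [hQr1]
  · rw [div_eq_iff (by linarith : r2 - α ≠ 0)]; linarith [hQr2]
  · intro ρ ⟨h1, h2⟩
    have hp : 0 < (α - ρ) * (vbar * (ρ - r1) * (r2 - ρ)) :=
      mul_pos (by linarith) (mul_pos (mul_pos hvbar (by linarith)) (by linarith))
    nlinarith [hkey ρ, hp]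
  · intro ρ ⟨h1, h2⟩
    have hp : 0 < (ρ - α) * (vbar * (ρ - r1) * (r2 - ρ)) :=
      mul_pos (by linarith) (mul_pos (mul_pos hvbar (by linarith)) (by linarith))
    nlinarith [hkey ρ, hp]

/-- Lemma 3.3: for `v(ρ) = v̄(1-ρ)²` the diffusivity
`D(ρ) = 2hv̄³ρ(1-ρ)²((1-ρ)³ - σρ)`, `σ = 2τ/(hv̄)`, satisfies (D1) with the
unique threshold `α ∈ (0,1)` defined by `(1-α)³ = σα`; if `α > 1/2` the chord
conditions hold for every admissible slope `m`, giving infinitely many pairs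
of end states `(ℓ⁻, ℓ⁺)`. -/
theorem stmt18 (vbar h τ σ : ℝ) (hvbar : 0 < vbar) (hh : 0 < h) (hτ : 0 < τ)
    (hσ : σ = 2 * τ / (h * vbar))
    (D f : ℝ → ℝ)
    (hD : ∀ ρ, D ρ = 2 * h * vbar ^ 3 * ρ * (1 - ρ) ^ 2 * ((1 - ρ) ^ 3 - σ * ρ))
    (hf : ∀ ρ, f ρ = vbar * ρ * (1 - ρ) ^ 2) :
    -- (i)
    (∃! α : ℝ, α ∈ Ioo (0:ℝ) 1 ∧ (1 - α) ^ 3 = σ * α) ∧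
    ∀ α ∈ Ioo (0:ℝ) 1, (1 - α) ^ 3 = σ * α →
      ((∀ ρ ∈ Ioo (0:ℝ) α, 0 < D ρ) ∧ (∀ ρ ∈ Ioo α 1, D ρ < 0)) ∧
      -- (ii)
      (1 / 2 < α →
        (∀ m : ℝ, vbar * (1 - α) * (1 - 3 * α) < m → m < -(vbar * α * (1 - α)) →
          ∃ ℓm ∈ Ioo (0:ℝ) α, ∃ ℓp ∈ Ioo α 1,
            (f α - f ℓm) / (α - ℓm) = m ∧ (f ℓp - f α) / (ℓp - α) = m ∧
            (∀ ρ ∈ Ioo ℓm α, f α + m * (ρ - α) < f ρ) ∧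
            (∀ ρ ∈ Ioo α ℓp, f ρ < f α + m * (ρ - α))) ∧
        Set.Infinite {p : ℝ × ℝ | p.1 ∈ Ioo (0:ℝ) α ∧ p.2 ∈ Ioo α 1 ∧
          ∃ m : ℝ, (f α - f p.1) / (α - p.1) = m ∧ (f p.2 - f α) / (p.2 - α) = m ∧
            (∀ ρ ∈ Ioo p.1 α, f α + m * (ρ - α) < f ρ) ∧
            (∀ ρ ∈ Ioo α p.2, f ρ < f α + m * (ρ - α))}) := by
  have hσ0 : 0 < σ := by rw [hσ]; positivity
  -- strict monotonicity of g(ρ) = (1-ρ)^3 - σρ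
  have hanti : ∀ x y : ℝ, x < y → (1 - y) ^ 3 - σ * y < (1 - x) ^ 3 - σ * x := by
    intro x y hxy
    nlinarith [mul_nonneg (by linarith : (0:ℝ) ≤ y - x) (sq_nonneg (2 - x - y)),
      mul_nonneg (by linarith : (0:ℝ) ≤ y - x) (sq_nonneg (1 - x)),
      mul_nonneg (by linarith : (0:ℝ) ≤ y - x) (sq_nonneg (1 - y)),
      mul_pos hσ0 (sub_pos.2 hxy)]
  -- existence of α
  have hc : ContinuousOn (fun ρ : ℝ => (1 - ρ) ^ 3 - σ * ρ) (Icc 0 1) := by fun_prop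
  have hiv := intermediate_value_Ioo' (by norm_num : (0:ℝ) ≤ 1) hc
  have h0mem : (0:ℝ) ∈ Ioo ((1 - (1:ℝ)) ^ 3 - σ * 1) ((1 - (0:ℝ)) ^ 3 - σ * 0) := by
    constructor <;> simp <;> linarith
  obtain ⟨α₀, hα₀mem, hgα₀⟩ := hiv h0mem
  have hroot₀ : (1 - α₀) ^ 3 = σ * α₀ := by
    have : (1 - α₀) ^ 3 - σ * α₀ = 0 := hgα₀
    linarith
  have huniq : ∀ β ∈ Ioo (0:ℝ) 1, (1 - β) ^ 3 = σ * β → β = α₀ := by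
    intro β hβ hrβ
    rcases lt_trichotomy β α₀ with hlt | heq | hgt
    · have := hanti β α₀ hlt; nlinarith
    · exact heq
    · have := hanti α₀ β hgt; nlinarith
  constructor
  · exact ⟨α₀, ⟨hα₀mem, hroot₀⟩, fun β ⟨hβ, hrβ⟩ => huniq β hβ hrβ⟩
  intro α hα hroot
  constructor
  · constructor
    · intro ρ ⟨h1, h2⟩
      rw [hD]
      have hg : 0 < (1 - ρ) ^ 3 - σ * ρ := by
        have := hanti ρ α h2; nlinarith
      have : 0 < 1 - ρ := by cases hα; linarith
      positivity
    · intro ρ ⟨h1, h2⟩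
      rw [hD]
      have hg : (1 - ρ) ^ 3 - σ * ρ < 0 := by
        have := hanti α ρ h1; nlinarith
      apply mul_neg_of_pos_of_neg _ hg
      have h0 : 0 < ρ := lt_trans hα.1 h1
      have h3 : 0 < 1 - ρ := by linarith
      positivity
  intro hhalf
  have hα0 := hα.1
  have hα1 := hα.2
  constructor
  · intro m hm1 hm2
    exact chord_exists vbar α m hvbar hα0 hα1 hm1 hm2 f hf
  · -- infinitude
    set L := vbar * (1 - α) * (1 - 3 * α) with hL
    set U := -(vbar * α * (1 - α)) with hU
    have hLU : L < U := by
      rw [hL, hU]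
      nlinarith [mul_pos (mul_pos hvbar (by linarith : (0:ℝ) < 1 - α))
        (by linarith : (0:ℝ) < 2 * α - 1)]
    set S := {p : ℝ × ℝ | p.1 ∈ Ioo (0:ℝ) α ∧ p.2 ∈ Ioo α 1 ∧
          ∃ m : ℝ, (f α - f p.1) / (α - p.1) = m ∧ (f p.2 - f α) / (p.2 - α) = m ∧
            (∀ ρ ∈ Ioo p.1 α, f α + m * (ρ - α) < f ρ) ∧
            (∀ ρ ∈ Ioo α p.2, f ρ < f α + m * (ρ - α))} with hS
    have key : ∀ m : ℝ, ∃ p : ℝ × ℝ,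
        m ∈ Ioo L U → (p ∈ S ∧ (f α - f p.1) / (α - p.1) = m) := by
      intro m
      by_cases hm : m ∈ Ioo L U
      · obtain ⟨ℓm, hℓm, ℓp, hℓp, hs1, hs2, hab1, hab2⟩ :=
          chord_exists vbar α m hvbar hα0 hα1 hm.1 hm.2 f hf
        exact ⟨(ℓm, ℓp), fun _ => ⟨⟨hℓm, hℓp, m, hs1, hs2, hab1, hab2⟩, hs1⟩⟩
      · exact ⟨(0, 0), fun hc => absurd hc hm⟩
    choose F hF using key
    have hinj : Set.InjOn F (Ioo L U) := by
      intro a ha b hb hab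
      have h1 := (hF a ha).2
      have h2 := (hF b hb).2
      rw [hab] at h1
      exact h1.symm.trans h2
    have hsub : F '' Ioo L U ⊆ S := by
      rintro _ ⟨m, hm, rfl⟩
      exact (hF m hm).1
    exact ((Set.Ioo_infinite hLU).image hinj).mono hsub
end

section
/- Let 0 < α < β < 1 and let v : [0,1] → ℝ be defined by v(ρ) := −ρ³/3 + ((α+β)/2)ρ² − αβρ + γ with γ := 1/3 − (α+β)/2 + αβ, so that v′(ρ) = −(ρ − α)(ρ − β) and v(1) = 0. Then: (i) v(α) = (1/6)(α − 1)²(α − 3β + 2); (ii) v(ρ) ≥ 0 for all ρ ∈ [0,1] if and only if α ≥ 3β − 2, and v(ρ) > 0 for all ρ ∈ [0,1) if and only if α > 3β − 2; (iii) if α > 3β − 2, then with f(ρ) := ρv(ρ) one has (f(β) − f(α))/(β − α) > 0. -/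
/-!
Since `v(1) = 0`, completing the square in the quadratic cofactor of `1 - ρ` gives
`48 v(ρ) = (1 - ρ) ((4(1 - ρ) - 3(2 - α - β))² + 3 (β - 3α + 2)(α - 3β + 2))`, and
`β - 3α + 2 = (α - 3β + 2) + 4(β - α)`. Hence `α ≥ 3β - 2` (resp. `>`) forces `v ≥ 0` (resp. `v > 0`)
on `ρ ≤ 1` (resp. `ρ < 1`), while `v(α) = (α - 1)² (α - 3β + 2) / 6` gives the converse.
For (iii), the slope of `ρ v(ρ)` between `α` and `β`, written in the barycentric coordinates
`1 - β, β - α, α` of the simplex `0 ≤ α ≤ β ≤ 1`, has nonnegative coefficients and a positive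
one at `(1 - β)³`.
-/

open Set

noncomputable def cubicVelocity (α β ρ : ℝ) : ℝ :=
  -ρ ^ 3 / 3 + (α + β) / 2 * ρ ^ 2 - α * β * ρ + (1 / 3 - (α + β) / 2 + α * β)

section
variable {α β : ℝ}

theorem hasDerivAt_cubicVelocity (α β ρ : ℝ) :
    HasDerivAt (cubicVelocity α β) (-((ρ - α) * (ρ - β))) ρ := by
  have h := ((((hasDerivAt_pow 3 ρ).neg.div_const 3).add
    ((hasDerivAt_pow 2 ρ).const_mul ((α + β) / 2))).sub
    ((hasDerivAt_id ρ).const_mul (α * β))).add_const (1 / 3 - (α + β) / 2 + α * β)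
  refine h.congr_deriv ?_
  push_cast
  ring

theorem cubicVelocity_one (α β : ℝ) : cubicVelocity α β 1 = 0 := by
  unfold cubicVelocity; ring

theorem cubicVelocity_self (α β : ℝ) :
    cubicVelocity α β α = 1 / 6 * (α - 1) ^ 2 * (α - 3 * β + 2) := by
  unfold cubicVelocity; ring

theorem cubicVelocity_eq (α β ρ : ℝ) :
    48 * cubicVelocity α β ρ = (1 - ρ) * ((4 * (1 - ρ) - 3 * (2 - α - β)) ^ 2
      + 3 * ((β - 3 * α + 2) * (α - 3 * β + 2))) := by
  unfold cubicVelocity; ring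

theorem cubicVelocity_nonneg (hαβ : α ≤ β) (h : 3 * β - 2 ≤ α) {ρ : ℝ} (hρ : ρ ≤ 1) :
    0 ≤ cubicVelocity α β ρ := by
  have hquad : 0 ≤ (4 * (1 - ρ) - 3 * (2 - α - β)) ^ 2
      + 3 * ((β - 3 * α + 2) * (α - 3 * β + 2)) := by
    have : 0 ≤ (β - 3 * α + 2) * (α - 3 * β + 2) := mul_nonneg (by linarith) (by linarith)
    positivity
  have := cubicVelocity_eq α β ρ
  linarith [mul_nonneg (sub_nonneg.2 hρ) hquad]

theorem cubicVelocity_pos (hαβ : α ≤ β) (h : 3 * β - 2 < α) {ρ : ℝ} (hρ : ρ < 1) :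
    0 < cubicVelocity α β ρ := by
  have hquad : 0 < (4 * (1 - ρ) - 3 * (2 - α - β)) ^ 2
      + 3 * ((β - 3 * α + 2) * (α - 3 * β + 2)) := by
    have : 0 < (β - 3 * α + 2) * (α - 3 * β + 2) := mul_pos (by linarith) (by linarith)
    positivity
  have := cubicVelocity_eq α β ρ
  linarith [mul_pos (sub_pos.2 hρ) hquad]

theorem cubicVelocity_self_nonneg_iff (hα : α ≠ 1) :
    0 ≤ cubicVelocity α β α ↔ 3 * β - 2 ≤ α := by
  have : 0 < 1 / 6 * (α - 1) ^ 2 := by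
    have := sub_ne_zero.2 hα
    positivity
  rw [cubicVelocity_self, mul_nonneg_iff_of_pos_left this]
  constructor <;> intro <;> linarith

theorem cubicVelocity_self_pos_iff (hα : α ≠ 1) :
    0 < cubicVelocity α β α ↔ 3 * β - 2 < α := by
  have : 0 < 1 / 6 * (α - 1) ^ 2 := by
    have := sub_ne_zero.2 hα
    positivity
  rw [cubicVelocity_self, mul_pos_iff_of_pos_left this]
  constructor <;> intro <;> linarith

theorem slope_mul_cubicVelocity (hαβ : α ≠ β) :
    (β * cubicVelocity α β β - α * cubicVelocity α β α) / (β - α)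
      = (2 * (1 - β) ^ 3 + 3 * (1 - β) ^ 2 * (β - α) + α * (β - α) ^ 2) / 6 := by
  rw [div_eq_iff (sub_ne_zero.2 hαβ.symm)]
  unfold cubicVelocity
  ring

theorem slope_mul_cubicVelocity_pos (h0 : 0 ≤ α) (hαβ : α < β) (hβ : β < 1) :
    0 < (β * cubicVelocity α β β - α * cubicVelocity α β α) / (β - α) := by
  rw [slope_mul_cubicVelocity hαβ.ne]
  have hβα := sub_pos.2 hαβ
  have h1β := sub_pos.2 hβ
  positivity

end

/-- Lemma 3.4: properties of the cubic velocity with `v'(ρ) = -(ρ-α)(ρ-β)`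
and `v(1) = 0`. -/
theorem stmt19 (α β γ : ℝ) (h0 : 0 < α) (hαβ : α < β) (hβ : β < 1)
    (hγ : γ = 1 / 3 - (α + β) / 2 + α * β)
    (v : ℝ → ℝ)
    (hv : ∀ ρ, v ρ = -ρ ^ 3 / 3 + (α + β) / 2 * ρ ^ 2 - α * β * ρ + γ) :
    (∀ ρ, deriv v ρ = -((ρ - α) * (ρ - β))) ∧ v 1 = 0 ∧
    -- (i)
    v α = 1 / 6 * (α - 1) ^ 2 * (α - 3 * β + 2) ∧
    -- (ii)
    ((∀ ρ ∈ Icc (0:ℝ) 1, 0 ≤ v ρ) ↔ 3 * β - 2 ≤ α) ∧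
    ((∀ ρ ∈ Ico (0:ℝ) 1, 0 < v ρ) ↔ 3 * β - 2 < α) ∧
    -- (iii)
    (3 * β - 2 < α → 0 < (β * v β - α * v α) / (β - α)) := by
  subst hγ
  obtain rfl : v = cubicVelocity α β := funext hv
  have hα1 : α < 1 := hαβ.trans hβ
  refine ⟨fun ρ => (hasDerivAt_cubicVelocity α β ρ).deriv, cubicVelocity_one α β,
    cubicVelocity_self α β, ⟨fun h => ?_, fun h ρ hρ => cubicVelocity_nonneg hαβ.le h hρ.2⟩,
    ⟨fun h => ?_, fun h ρ hρ => cubicVelocity_pos hαβ.le h hρ.2⟩,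
    fun _ => slope_mul_cubicVelocity_pos h0.le hαβ hβ⟩
  · exact (cubicVelocity_self_nonneg_iff hα1.ne).1 (h α ⟨h0.le, hα1.le⟩)
  · exact (cubicVelocity_self_pos_iff hα1.ne).1 (h α ⟨h0.le, hα1⟩)
end
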